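/- arXiv:1511.04558 — 7 statements merged into one kernel-verified Lean document; each statement's English description precedes it below -/
import Mathlib

section
/- In the proper divisibility order on ℕ^2 restricted to P(a,b) with a,b ≥ 1, for any covering relation x → y with y ≠ (a,b), either y_1 = x_1 + 1 or y_2 = x_2 + 1. -/
/-- `x` properly divides `y` in `ℕ²`: each coordinate is zero in both or strictly smaller. -/
def pdiv (x y : ℕ × ℕ) : Prop :=
  ((x.1 = 0 ∧ y.1 = 0) ∨ x.1 < y.1) ∧ ((x.2 = 0 ∧ y.2 = 0) ∨ x.2 < y.2)

/-- Strict proper divisibility on `ℕ²`. -/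
def plt (x y : ℕ × ℕ) : Prop := x ≠ y ∧ pdiv x y

/-- The proper divisibility order on `ℕ²`. -/
def ple (x y : ℕ × ℕ) : Prop := x = y ∨ pdiv x y

/-- `y` covers `x` in the proper divisibility order on `ℕ²`. -/
def pcov (x y : ℕ × ℕ) : Prop := plt x y ∧ ∀ z, plt x z → ¬ plt z y

/-- The poset `P(a,b)` of proper divisors of `(a,b)` together with `(a,b)` itself. -/
def Pset (a b : ℕ) : Set (ℕ × ℕ) := {z | z = (a, b) ∨ pdiv z (a, b)}

theorem stmt4 (a b : ℕ) (ha : 1 ≤ a) (hb : 1 ≤ b) (x y : ℕ × ℕ)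
    (hx : x ∈ Pset a b) (hy : y ∈ Pset a b)
    (hlt : plt x y) (hcov : ∀ z ∈ Pset a b, plt x z → ¬ plt z y)
    (htop : y ≠ (a, b)) :
    y.1 = x.1 + 1 ∨ y.2 = x.2 + 1 := by
  by_contra hcon
  push_neg at hcon
  obtain ⟨h1, h2⟩ := hcon
  obtain ⟨hne, hp1, hp2⟩ := hlt
  have hyd : pdiv y (a, b) := by
    rcases hy with h | h
    · exact absurd h htop
    · exact h
  obtain ⟨hya, hyb⟩ := hyd
  rcases hp1 with ⟨hx1, hy1⟩ | hx1 <;> rcases hp2 with ⟨hx2, hy2⟩ | hx2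
  · exact hne (Prod.ext (by omega) (by omega))
  · -- first coord both zero, second strict; y.2 ≥ x.2 + 2
    have hy2b : y.2 < b := by rcases hyb with ⟨h, _⟩ | h <;> omega
    refine hcov (0, x.2 + 1) ?_ ?_ ?_
    · exact Or.inr ⟨Or.inr (by omega), Or.inr (by omega)⟩
    · exact ⟨by simp only [Ne, Prod.ext_iff]; omega, Or.inl ⟨hx1, rfl⟩, Or.inr (by omega)⟩
    · exact ⟨by simp only [Ne, Prod.ext_iff]; omega, Or.inl ⟨rfl, hy1⟩, Or.inr (by omega)⟩
  · have hy1a : y.1 < a := by rcases hya with ⟨h, _⟩ | h <;> omega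
    refine hcov (x.1 + 1, 0) ?_ ?_ ?_
    · exact Or.inr ⟨Or.inr (by omega), Or.inr (by omega)⟩
    · exact ⟨by simp only [Ne, Prod.ext_iff]; omega, Or.inr (by omega), Or.inl ⟨hx2, rfl⟩⟩
    · exact ⟨by simp only [Ne, Prod.ext_iff]; omega, Or.inr (by omega), Or.inl ⟨rfl, hy2⟩⟩
  · have hy1a : y.1 < a := by rcases hya with ⟨h, _⟩ | h <;> omega
    have hy2b : y.2 < b := by rcases hyb with ⟨h, _⟩ | h <;> omega
    refine hcov (x.1 + 1, x.2 + 1) ?_ ?_ ?_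
    · exact Or.inr ⟨Or.inr (by omega), Or.inr (by omega)⟩
    · exact ⟨by simp only [Ne, Prod.ext_iff]; omega, Or.inr (by omega), Or.inr (by omega)⟩
    · exact ⟨by simp only [Ne, Prod.ext_iff]; omega, Or.inr (by omega), Or.inr (by omega)⟩
end

section
/- The poset P(4,4) of proper divisors of (4,4) (with top and bottom) admits no recursive atom ordering: for every linear ordering of its three atoms (1,0), (1,1), (0,1), condition (ii) of the definition of recursive atom ordering fails. -/
/-- An atom of `P(4,4)`: an element covering the bottom `(0,0)`. -/
def atom44 (p : ℕ × ℕ) : Prop := p ∈ Pset 4 4 ∧ pcov (0, 0) p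

lemma mem_Pset44 (z : ℕ × ℕ) : z ∈ Pset 4 4 ↔ (z = (4,4) ∨ pdiv z (4,4)) := Iff.rfl

lemma atom_a : atom44 (1, 0) := by
  refine ⟨(mem_Pset44 _).2 (Or.inr (by unfold pdiv; decide)), ⟨by decide, by unfold pdiv; decide⟩, ?_⟩
  rintro z ⟨hz0, _⟩ ⟨_, h1, h2⟩
  simp only [pdiv] at h1 h2
  exact hz0 (by apply Prod.ext <;> omega)

lemma atom_b : atom44 (0, 1) := by
  refine ⟨(mem_Pset44 _).2 (Or.inr (by unfold pdiv; decide)), ⟨by decide, by unfold pdiv; decide⟩, ?_⟩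
  rintro z ⟨hz0, _⟩ ⟨_, h1, h2⟩
  simp only [pdiv] at h1 h2
  exact hz0 (by apply Prod.ext <;> omega)

lemma atom_cases {p : ℕ × ℕ} (hp : atom44 p) : p = (1, 0) ∨ p = (0, 1) ∨ p = (1, 1) := by
  obtain ⟨_, ⟨hne, _⟩, hcov⟩ := hp
  have h1 : p.1 ≤ 1 := by
    by_contra h
    push_neg at h
    have hz : plt (1, 0) p := by
      refine ⟨by rintro rfl; omega, Or.inr h, ?_⟩
      rcases Nat.eq_zero_or_pos p.2 with h' | h'
      · exact Or.inl ⟨rfl, h'⟩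
      · exact Or.inr h'
    exact hcov (1, 0) ⟨by decide, by unfold pdiv; decide⟩ hz
  have h2 : p.2 ≤ 1 := by
    by_contra h
    push_neg at h
    have hz : plt (0, 1) p := by
      refine ⟨by rintro rfl; omega, ?_, Or.inr h⟩
      rcases Nat.eq_zero_or_pos p.1 with h' | h'
      · exact Or.inl ⟨rfl, h'⟩
      · exact Or.inr h'
    exact hcov (0, 1) ⟨by decide, by unfold pdiv; decide⟩ hz
  have h0 : p ≠ (0, 0) := by rintro rfl; exact hne rfl
  rcases p with ⟨x, y⟩
  simp only [Prod.mk.injEq, ne_eq] at *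
  omega

/-- `P(4,4)` admits no recursive atom ordering: for every strict linear order on its
atoms, condition (ii) of the definition of a recursive atom ordering fails. -/
theorem stmt5 (prec : ℕ × ℕ → ℕ × ℕ → Prop)
    (hirr : ∀ p, atom44 p → ¬ prec p p)
    (htrans : ∀ p q r, atom44 p → atom44 q → atom44 r → prec p q → prec q r → prec p r)
    (htot : ∀ p p', atom44 p → atom44 p' → p ≠ p' → prec p p' ∨ prec p' p) :
    ∃ p p' q, atom44 p ∧ atom44 p' ∧ prec p p' ∧ q ∈ Pset 4 4 ∧ plt p q ∧ plt p' q ∧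
      ∀ p'' q', atom44 p'' → prec p'' p' → q' ∈ Pset 4 4 → pcov p' q' →
        ¬ (plt p'' q' ∧ ple q' q) := by
  rcases htot (1,0) (0,1) atom_a atom_b (by decide) with hab | hba
  · refine ⟨(1,0), (0,1), (2,3), atom_a, atom_b, hab,
      (mem_Pset44 _).2 (Or.inr (by unfold pdiv; decide)),
      ⟨by decide, by unfold pdiv; decide⟩, ⟨by decide, by unfold pdiv; decide⟩, ?_⟩
    rintro p'' q' hp'' hprec _ hcov ⟨⟨hne1, hd1, _⟩, hle⟩
    have hp''ne : p'' ≠ (0,1) := by rintro rfl; exact hirr _ atom_b hprec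
    have h1 : p''.1 = 1 := by
      rcases atom_cases hp'' with rfl | rfl | rfl <;> simp_all
    -- so q'.1 ≥ 2
    have hq1 : 2 ≤ q'.1 := by rcases hd1 with ⟨h, _⟩ | h <;> omega
    -- ple q' (2,3) forces q' = (2,3)
    have hq' : q' = (2, 3) := by
      rcases hle with rfl | ⟨hA, _⟩
      · rfl
      · rcases hA with ⟨h, _⟩ | h <;> omega
    subst hq'
    exact hcov.2 (0, 2) ⟨by decide, by unfold pdiv; decide⟩ ⟨by decide, by unfold pdiv; decide⟩
  · refine ⟨(0,1), (1,0), (3,2), atom_b, atom_a, hba,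
      (mem_Pset44 _).2 (Or.inr (by unfold pdiv; decide)),
      ⟨by decide, by unfold pdiv; decide⟩, ⟨by decide, by unfold pdiv; decide⟩, ?_⟩
    rintro p'' q' hp'' hprec _ hcov ⟨⟨hne1, _, hd2⟩, hle⟩
    have hp''ne : p'' ≠ (1,0) := by rintro rfl; exact hirr _ atom_a hprec
    have h2 : p''.2 = 1 := by
      rcases atom_cases hp'' with rfl | rfl | rfl <;> simp_all
    have hq2 : 2 ≤ q'.2 := by rcases hd2 with ⟨h, _⟩ | h <;> omega
    have hq' : q' = (3, 2) := by
      rcases hle with rfl | ⟨_, hB⟩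
      · rfl
      · rcases hB with ⟨h, _⟩ | h <;> omega
    subst hq'
    exact hcov.2 (2, 0) ⟨by decide, by unfold pdiv; decide⟩ ⟨by decide, by unfold pdiv; decide⟩
end

section
/- For every maximal chain (a,b) = p_0 → p_1 → ... → p_k = (0,0) in the dual poset P(a,b)* of length k ≥ 2 that is 'falling' (meaning every consecutive increment pair is admissible), the last nontrivial element p_{k-1} is one of (1,1), (1,0), (0,1); moreover if p_{k-1} = (1,0) then p_{k-2} − p_{k-1} = (1, v) with v ≥ 2, and if p_{k-1} = (0,1) then p_{k-2} − p_{k-1} = (u, 1) with u ≥ 2. -/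
/-- A border element: of the form `(1,m)`, `(m,1)`, `(0,m)` or `(m,0)` with `m ≥ 2`. -/
def border (p : ℕ × ℕ) : Prop :=
  (p.1 = 1 ∧ 2 ≤ p.2) ∨ (p.2 = 1 ∧ 2 ≤ p.1) ∨ (p.1 = 0 ∧ 2 ≤ p.2) ∨ (p.2 = 0 ∧ 2 ≤ p.1)

/-- Decrease each nonzero coordinate by one (the lexicographically least atom below). -/
def pdec (p : ℕ × ℕ) : ℕ × ℕ := (p.1 - 1, p.2 - 1)

/-- `p 0 = (a,b) → p 1 → ⋯ → p k = (0,0)` is a falling maximal chain of length `k`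
in the dual poset `P(a,b)*`: each step `p (i+1) ⋖ p i` is a cover in proper divisibility,
no step goes to the least atom `pdec (p i)`, and no interior element is a border element. -/
def FallingChain (a b k : ℕ) (p : ℕ → ℕ × ℕ) : Prop :=
  p 0 = (a, b) ∧ p k = (0, 0) ∧
  (∀ i, i < k → pcov (p (i + 1)) (p i)) ∧
  (∀ i, i + 2 ≤ k → p (i + 1) ≠ pdec (p i)) ∧
  (∀ i, 1 ≤ i → i + 2 ≤ k → ¬ border (p i))

/-- A falling chain normalized to be `(0,0)` beyond index `k` (so chains are counted once). -/
def NormFallingChain (a b k : ℕ) (p : ℕ → ℕ × ℕ) : Prop :=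
  FallingChain a b k p ∧ ∀ i, k ≤ i → p i = (0, 0)


lemma plt00 (x : ℕ × ℕ) (hx : x ≠ (0, 0)) : plt (0, 0) x := by
  refine ⟨fun h => hx h.symm, ?_, ?_⟩ <;> simp <;> omega

lemma atom (x : ℕ × ℕ) (h : pcov (0, 0) x) : x = (1, 1) ∨ x = (1, 0) ∨ x = (0, 1) := by
  obtain ⟨⟨hne, _⟩, hmax⟩ := h
  have hx1 : x.1 ≤ 1 := by
    by_contra h1
    exact hmax (1, 0) (plt00 _ (by simp))
      ⟨by intro he; rw [← he] at h1; simp at h1, Or.inr (by omega), by simp; omega⟩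
  have hx2 : x.2 ≤ 1 := by
    by_contra h2
    exact hmax (0, 1) (plt00 _ (by simp))
      ⟨by intro he; rw [← he] at h2; simp at h2, by simp; omega, Or.inr (by omega)⟩
  have hne' : x ≠ (0, 0) := fun h => hne h.symm
  obtain ⟨x1, x2⟩ := x
  have hn : ¬ (x1 = 0 ∧ x2 = 0) := by simpa [Prod.ext_iff] using hne'
  simp only [Prod.mk.injEq]
  simp only at hx1 hx2
  omega

lemma cov10 (q : ℕ × ℕ) (h : pcov (1, 0) q) : q.1 = 2 := by
  obtain ⟨⟨hne, hp1, hp2⟩, hmax⟩ := h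
  have hq1 : 2 ≤ q.1 := by simp at hp1; omega
  by_contra h2
  have h3 : 3 ≤ q.1 := by omega
  exact hmax (2, 0) ⟨by simp, Or.inr (by norm_num), Or.inl (by simp)⟩
    ⟨by intro he; rw [← he] at h3; simp at h3, Or.inr (by omega), by simp; omega⟩

lemma cov01 (q : ℕ × ℕ) (h : pcov (0, 1) q) : q.2 = 2 := by
  obtain ⟨⟨hne, hp1, hp2⟩, hmax⟩ := h
  have hq2 : 2 ≤ q.2 := by simp at hp2; omega
  by_contra h2
  have h3 : 3 ≤ q.2 := by omega
  exact hmax (0, 2) ⟨by simp, Or.inl (by simp), Or.inr (by norm_num)⟩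
    ⟨by intro he; rw [← he] at h3; simp at h3, by simp; omega, Or.inr (by omega)⟩

theorem stmt6 (a b k : ℕ) (p : ℕ → ℕ × ℕ) (hk : 2 ≤ k)
    (h : FallingChain a b k p) :
    (p (k - 1) = (1, 1) ∨ p (k - 1) = (1, 0) ∨ p (k - 1) = (0, 1)) ∧
    (p (k - 1) = (1, 0) → (p (k - 2)).1 = 2 ∧ 2 ≤ (p (k - 2)).2) ∧
    (p (k - 1) = (0, 1) → 2 ≤ (p (k - 2)).1 ∧ (p (k - 2)).2 = 2) := by
  obtain ⟨h0, hk0, hcov, hdec, hbord⟩ := h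
  have e1 : k - 1 + 1 = k := by omega
  have e2 : k - 2 + 1 = k - 1 := by omega
  have h1 : pcov ((0:ℕ), (0:ℕ)) (p (k - 1)) := by
    have := hcov (k - 1) (by omega); rwa [e1, hk0] at this
  have h2 : pcov (p (k - 1)) (p (k - 2)) := by
    have := hcov (k - 2) (by omega); rwa [e2] at this
  have hd : p (k - 1) ≠ pdec (p (k - 2)) := by
    have := hdec (k - 2) (by omega); rwa [e2] at this
  refine ⟨atom _ h1, ?_, ?_⟩
  · intro hx
    rw [hx] at h2 hd
    have hq1 := cov10 _ h2
    refine ⟨hq1, ?_⟩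
    by_contra hle
    apply hd
    unfold pdec
    rw [Prod.ext_iff]
    constructor <;> simp <;> omega
  · intro hx
    rw [hx] at h2 hd
    have hq2 := cov01 _ h2
    obtain ⟨⟨hne, hp1, hp2⟩, _⟩ := h2
    have hq1 : 2 ≤ (p (k - 2)).1 := by
      by_contra hle
      apply hd
      unfold pdec
      rw [Prod.ext_iff]
      constructor <;> simp <;> omega
    exact ⟨hq1, hq2⟩
end

section
/- Let 2 ≤ b. In the dual poset P(2,b)*, there are exactly 2 falling maximal chains when b > 2, namely (2,b) → (1,0) → (0,0) and (2,b) → (1,1) → (0,0); and exactly 2 falling maximal chains when b = 2, namely (2,2) → (1,0) → (0,0) and (2,2) → (0,1) → (0,0). -/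
lemma plt_mk {x1 x2 y1 y2 : ℕ} : plt (x1, x2) (y1, y2) ↔
    ¬(x1 = y1 ∧ x2 = y2) ∧ ((x1 = 0 ∧ y1 = 0) ∨ x1 < y1) ∧ ((x2 = 0 ∧ y2 = 0) ∨ x2 < y2) := by
  simp [plt, pdiv, Prod.ext_iff]

/-- `(a,c)` with both coordinates `≤ 1` and not `(0,0)` covers the bottom. -/
lemma pcov_atom {a c : ℕ} (h1 : a ≤ 1) (h2 : c ≤ 1) (h0 : ¬(a = 0 ∧ c = 0)) :
    pcov (0, 0) (a, c) := by
  constructor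
  · rw [plt_mk]; omega
  · rintro ⟨z1, z2⟩ hz hzy
    rw [plt_mk] at hz hzy
    omega

/-- The unique element covered by `(y1, y2)` with `y1 ≤ 1` is `(0, y2 - 1)`. -/
lemma pcov_low {x : ℕ × ℕ} {y1 y2 : ℕ} (hy : y1 ≤ 1) (h : pcov x (y1, y2)) :
    x = (0, y2 - 1) := by
  obtain ⟨x1, x2⟩ := x
  obtain ⟨hlt, hmin⟩ := h
  rw [plt_mk] at hlt
  by_cases hx2 : x1 = 0 ∧ x2 = y2 - 1
  · simp [hx2.1, hx2.2]
  · exfalso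
    have h2 : x2 + 1 < y2 := by omega
    exact hmin (0, x2 + 1) (by rw [plt_mk]; omega) (by rw [plt_mk]; omega)

/-- Anything covering the bottom has both coordinates at most `1`. -/
lemma atom_of_pcov00 {a c : ℕ} (h : pcov (0, 0) (a, c)) :
    a ≤ 1 ∧ c ≤ 1 ∧ ¬(a = 0 ∧ c = 0) := by
  obtain ⟨hlt, hmin⟩ := h
  rw [plt_mk] at hlt
  refine ⟨?_, ?_, by omega⟩
  · by_contra h'
    exact hmin (1, 0) (by rw [plt_mk]; omega) (by rw [plt_mk]; omega)
  · by_contra h'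
    exact hmin (0, 1) (by rw [plt_mk]; omega) (by rw [plt_mk]; omega)

/-- `(1, j)` is covered by `(2, b)` whenever `j < b`. -/
lemma pcov_one {j b : ℕ} (h : j < b) : pcov (1, j) (2, b) := by
  constructor
  · rw [plt_mk]; omega
  · rintro ⟨z1, z2⟩ hz hzy
    rw [plt_mk] at hz hzy
    omega

/-- `(0, 1)` is covered by `(2, 2)`. -/
lemma pcov_zero_one : pcov (0, 1) (2, 2) := by
  constructor
  · rw [plt_mk]; omega
  · rintro ⟨z1, z2⟩ hz hzy
    rw [plt_mk] at hz hzy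
    omega

/-- Any falling chain in `P(2,b)*` has length `2`, with middle an atom distinct
from `pdec (2,b) = (1, b-1)` that is covered by `(2,b)`. -/
lemma falling_core {b k : ℕ} {p : ℕ → ℕ × ℕ} (hb : 2 ≤ b)
    (h : FallingChain 2 b k p) :
    k = 2 ∧ (p 1).1 ≤ 1 ∧ (p 1).2 ≤ 1 ∧ ¬((p 1).1 = 0 ∧ (p 1).2 = 0) ∧
      p 1 ≠ (1, b - 1) ∧ pcov (p 1) (2, b) := by
  obtain ⟨h0, hk, hcov, hdec, _⟩ := h
  match k, hk with
  | 0, hk =>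
    rw [h0] at hk
    exact absurd (congrArg Prod.fst hk) (by simp)
  | 1, hk =>
    have hc := hcov 0 (by omega)
    rw [show (0 : ℕ) + 1 = 1 from rfl, hk, h0] at hc
    have := atom_of_pcov00 hc
    omega
  | 2, hk =>
    have hc0 := hcov 0 (by omega)
    rw [show (0 : ℕ) + 1 = 1 from rfl, h0] at hc0
    have hc1 := hcov 1 (by omega)
    rw [show (1 : ℕ) + 1 = 2 from rfl, hk] at hc1
    have hatom : (p 1).1 ≤ 1 ∧ (p 1).2 ≤ 1 ∧ ¬((p 1).1 = 0 ∧ (p 1).2 = 0) := by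
      rw [show p 1 = ((p 1).1, (p 1).2) from rfl] at hc1
      exact atom_of_pcov00 hc1
    have hd := hdec 0 (by omega)
    rw [show (0 : ℕ) + 1 = 1 from rfl, h0] at hd
    refine ⟨rfl, hatom.1, hatom.2.1, hatom.2.2, ?_, hc0⟩
    simpa [pdec] using hd
  | (n + 3), hk =>
    exfalso
    have hc0 := hcov 0 (by omega)
    rw [show (0 : ℕ) + 1 = 1 from rfl, h0] at hc0
    have h1le : (p 1).1 ≤ 1 := by
      obtain ⟨⟨_, hdiv⟩, _⟩ := hc0
      have := hdiv.1
      omega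
    have hc1 := hcov 1 (by omega)
    rw [show (1 : ℕ) + 1 = 2 from rfl,
      show p 1 = ((p 1).1, (p 1).2) from rfl] at hc1
    have hp2 : p 2 = (0, (p 1).2 - 1) := pcov_low h1le hc1
    have hd := hdec 1 (by omega)
    rw [show (1 : ℕ) + 1 = 2 from rfl] at hd
    apply hd
    rw [hp2]
    simp only [pdec, Prod.ext_iff]
    exact ⟨by omega, trivial⟩

/-- Construct the length-two falling chains. -/
lemma falling_build {b : ℕ} {p : ℕ → ℕ × ℕ} (hb : 2 ≤ b)
    (h0 : p 0 = (2, b)) (h2 : p 2 = (0, 0)) (hcov1 : pcov (p 1) (2, b))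
    (hatom : pcov (0, 0) (p 1)) (hd : p 1 ≠ (1, b - 1)) :
    FallingChain 2 b 2 p := by
  refine ⟨h0, h2, ?_, ?_, ?_⟩
  · intro i hi
    interval_cases i
    · rw [h0]; exact hcov1
    · rw [h2]; exact hatom
  · intro i hi
    have : i = 0 := by omega
    subst this
    rw [show (0 : ℕ) + 1 = 1 from rfl, h0]
    simpa [pdec] using hd
  · intro i hi1 hi2
    omega

theorem stmt7 (b : ℕ) (hb : 2 ≤ b) :
    (2 < b → ∀ k (p : ℕ → ℕ × ℕ), FallingChain 2 b k p ↔
      (k = 2 ∧ p 0 = (2, b) ∧ p 2 = (0, 0) ∧ (p 1 = (1, 0) ∨ p 1 = (1, 1)))) ∧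
    (b = 2 → ∀ k (p : ℕ → ℕ × ℕ), FallingChain 2 b k p ↔
      (k = 2 ∧ p 0 = (2, 2) ∧ p 2 = (0, 0) ∧ (p 1 = (1, 0) ∨ p 1 = (0, 1)))) := by
  constructor
  · intro hb2 k p
    constructor
    · intro h
      obtain ⟨hk2, ha1, ha2, ha0, hd, hcov⟩ := falling_core hb h
      subst hk2
      refine ⟨rfl, h.1, h.2.1, ?_⟩
      rcases hP : p 1 with ⟨a, c⟩
      rw [hP] at ha1 ha2 ha0 hd hcov
      simp only [ne_eq, Prod.mk.injEq, not_and] at hd ⊢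
      by_cases hc01 : a = 0 ∧ c = 1
      · exfalso
        rw [hc01.1, hc01.2] at hcov
        exact hcov.2 (0, 2) (by rw [plt_mk]; omega) (by rw [plt_mk]; omega)
      · omega
    · rintro ⟨hk2, h0, h2, hp1⟩
      subst hk2
      refine falling_build hb h0 h2 ?_ ?_ ?_
      · rcases hp1 with hp1 | hp1 <;> rw [hp1]
        · exact pcov_one (by omega)
        · exact pcov_one (by omega)
      · rcases hp1 with hp1 | hp1 <;> rw [hp1]
        · exact pcov_atom (by omega) (by omega) (by omega)
        · exact pcov_atom (by omega) (by omega) (by omega)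
      · rcases hp1 with hp1 | hp1 <;> rw [hp1] <;>
          simp only [ne_eq, Prod.mk.injEq, not_and] <;> omega
  · intro hb2 k p
    subst hb2
    constructor
    · intro h
      obtain ⟨hk2, ha1, ha2, ha0, hd, hcov⟩ := falling_core hb h
      subst hk2
      refine ⟨rfl, h.1, h.2.1, ?_⟩
      rcases hP : p 1 with ⟨a, c⟩
      rw [hP] at ha1 ha2 ha0 hd hcov
      simp only [ne_eq, Prod.mk.injEq, not_and] at hd ⊢
      omega
    · rintro ⟨hk2, h0, h2, hp1⟩
      subst hk2
      refine falling_build hb h0 h2 ?_ ?_ ?_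
      · rcases hp1 with hp1 | hp1 <;> rw [hp1]
        · exact pcov_one (by omega)
        · exact pcov_zero_one
      · rcases hp1 with hp1 | hp1 <;> rw [hp1]
        · exact pcov_atom (by omega) (by omega) (by omega)
        · exact pcov_atom (by omega) (by omega) (by omega)
      · rcases hp1 with hp1 | hp1 <;> rw [hp1] <;>
          simp only [ne_eq, Prod.mk.injEq, not_and] <;> omega
end

section
/- For b ≥ 4, the number of falling maximal chains of length 3 in P(3,b)* equals 2(b−3), and there are no falling maximal chains of any other length ≥ 2. -/
lemma plt_iff (u v a c : ℕ) : plt (u, v) (a, c) ↔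
    ¬(u = a ∧ v = c) ∧ ((u = 0 ∧ a = 0) ∨ u < a) ∧ ((v = 0 ∧ c = 0) ∨ v < c) := by
  simp [plt, pdiv, Prod.ext_iff]

lemma pdec_mk (a c : ℕ) : pdec (a, c) = (a - 1, c - 1) := rfl

lemma ne_mk (u v a c : ℕ) : ((u, v) : ℕ × ℕ) ≠ (a, c) ↔ ¬(u = a ∧ v = c) := by
  simp [Prod.ext_iff]

lemma border_mk (u v : ℕ) : border (u, v) ↔
    (u = 1 ∧ 2 ≤ v) ∨ (v = 1 ∧ 2 ≤ u) ∨ (u = 0 ∧ 2 ≤ v) ∨ (v = 0 ∧ 2 ≤ u) := Iff.rfl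

lemma cov_top {b : ℕ} (hb : 4 ≤ b) (u v : ℕ) :
    pcov (u, v) (3, b) ↔ (u = 2 ∧ v < b) ∨ (u < 3 ∧ v = b - 1) := by
  constructor
  · rintro ⟨h1, hz⟩
    rw [plt_iff] at h1
    by_contra hc
    have h2 := hz (u + 1, v + 1) ((plt_iff ..).mpr (by omega))
    rw [plt_iff] at h2
    omega
  · rintro h
    refine ⟨(plt_iff ..).mpr (by omega), ?_⟩
    rintro ⟨z1, z2⟩ h1 h2
    rw [plt_iff] at h1 h2
    omega

lemma cov_two {e : ℕ} (he : 2 ≤ e) (u v : ℕ) :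
    pcov (u, v) (2, e) ↔ (u = 1 ∧ v < e) ∨ (u = 0 ∧ v = e - 1) := by
  constructor
  · rintro ⟨h1, hz⟩
    rw [plt_iff] at h1
    by_contra hc
    have h2 := hz (0, v + 1) ((plt_iff ..).mpr (by omega))
    rw [plt_iff] at h2
    omega
  · rintro h
    refine ⟨(plt_iff ..).mpr (by omega), ?_⟩
    rintro ⟨z1, z2⟩ h1 h2
    rw [plt_iff] at h1 h2
    omega

lemma cov_bot (u v : ℕ) : pcov (0, 0) (u, v) ↔
    (u = 1 ∧ v = 1) ∨ (u = 1 ∧ v = 0) ∨ (u = 0 ∧ v = 1) := by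
  constructor
  · rintro ⟨h1, hz⟩
    rw [plt_iff] at h1
    by_contra hc
    have h10 := hz (1, 0) ((plt_iff ..).mpr (by omega))
    have h01 := hz (0, 1) ((plt_iff ..).mpr (by omega))
    rw [plt_iff] at h10 h01
    omega
  · rintro h
    refine ⟨(plt_iff ..).mpr (by omega), ?_⟩
    rintro ⟨z1, z2⟩ h1 h2
    rw [plt_iff] at h1 h2
    omega

lemma plt_small {x : ℕ × ℕ} {a c : ℕ} (h : plt x (a, c)) (h1 : a ≤ 1) (h2 : c ≤ 1) :
    x = (0, 0) := by
  obtain ⟨u, v⟩ := x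
  rw [plt_iff] at h
  simp only [Prod.mk.injEq]
  omega

/-- The candidate length-3 falling chains. -/
def Fch (b : ℕ) (ec : ℕ × Bool) : ℕ → ℕ × ℕ := fun i =>
  if i = 0 then (3, b)
  else if i = 1 then (2, ec.1)
  else if i = 2 then (if ec.2 then (1, 0) else if ec.1 = 2 then (0, 1) else (1, 1))
  else (0, 0)

lemma Fch_apply_ge (b : ℕ) (ec : ℕ × Bool) {i : ℕ} (hi : 3 ≤ i) : Fch b ec i = (0, 0) := by
  simp only [Fch]
  rw [if_neg (by omega), if_neg (by omega), if_neg (by omega)]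

lemma Fch_norm {b e : ℕ} (c : Bool) (hb : 4 ≤ b) (he1 : 2 ≤ e) (he2 : e ≤ b - 2) :
    NormFallingChain 3 b 3 (Fch b (e, c)) := by
  have hv2 : Fch b (e, c) 2 = (if c then (1, 0) else if e = 2 then (0, 1) else (1, 1)) := rfl
  have hcv2 : pcov (Fch b (e, c) 2) (2, e) := by
    rw [hv2]
    rcases c with _ | _
    · by_cases he : e = 2
      · rw [if_neg (by simp), if_pos he, cov_two he1]; omega
      · rw [if_neg (by simp), if_neg he, cov_two he1]; omega
    · rw [if_pos rfl, cov_two he1]; omega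
  have hcb : pcov (0, 0) (Fch b (e, c) 2) := by
    rw [hv2]
    rcases c with _ | _
    · by_cases he : e = 2
      · rw [if_neg (by simp), if_pos he, cov_bot]; omega
      · rw [if_neg (by simp), if_neg he, cov_bot]; omega
    · rw [if_pos rfl, cov_bot]; omega
  refine ⟨⟨rfl, rfl, ?_, ?_, ?_⟩, ?_⟩
  · intro i hi
    interval_cases i
    · show pcov (2, e) (3, b)
      rw [cov_top hb]
      omega
    · exact hcv2
    · exact hcb
  · intro i hi
    have hi1 : i ≤ 1 := by omega
    interval_cases i
    · show ((2, e) : ℕ × ℕ) ≠ pdec (3, b)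
      rw [pdec_mk, ne_mk]
      omega
    · show Fch b (e, c) 2 ≠ pdec (2, e)
      rw [hv2, pdec_mk]
      rcases c with _ | _
      · by_cases he : e = 2
        · rw [if_neg (by simp), if_pos he, ne_mk]; omega
        · rw [if_neg (by simp), if_neg he, ne_mk]; omega
      · rw [if_pos rfl, ne_mk]; omega
  · intro i hi1 hi2
    have : i = 1 := by omega
    subst this
    show ¬ border (2, e)
    rw [border_mk]
    omega
  · intro i hi
    exact Fch_apply_ge b (e, c) hi

lemma eq_Fch {b e : ℕ} {c : Bool} {p : ℕ → ℕ × ℕ}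
    (h0 : p 0 = (3, b)) (h1 : p 1 = (2, e))
    (h2 : p 2 = (if c then (1, 0) else if e = 2 then (0, 1) else (1, 1)))
    (hn : ∀ i, 3 ≤ i → p i = (0, 0)) : p = Fch b (e, c) := by
  funext i
  match i with
  | 0 => exact h0
  | 1 => exact h1
  | 2 => exact h2
  | (n + 3) =>
    rw [hn (n + 3) (by omega)]
    exact (Fch_apply_ge b (e, c) (by omega)).symm

lemma Fch_class {b : ℕ} (hb : 4 ≤ b) {p : ℕ → ℕ × ℕ} (h : NormFallingChain 3 b 3 p) :
    ∃ e c, 2 ≤ e ∧ e ≤ b - 2 ∧ p = Fch b (e, c) := by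
  obtain ⟨⟨h0, h3, hcov, hdec, hbord⟩, hnorm⟩ := h
  rcases hp1 : p 1 with ⟨u, v⟩
  have hc0 := hcov 0 (by norm_num)
  rw [h0, hp1, cov_top hb] at hc0
  have hd0 := hdec 0 (by norm_num)
  rw [h0, hp1, pdec_mk, ne_mk] at hd0
  have hb1 := hbord 1 le_rfl (by norm_num)
  rw [hp1, border_mk] at hb1
  have hu : u = 2 := by omega
  have hv1 : 2 ≤ v := by omega
  have hv2 : v ≤ b - 2 := by omega
  subst hu
  rcases hp2 : p 2 with ⟨s, t⟩
  have hc1 := hcov 1 (by norm_num)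
  rw [hp1, hp2, cov_two hv1] at hc1
  have hc2 := hcov 2 (by norm_num)
  rw [h3, hp2, cov_bot] at hc2
  have hd1 := hdec 1 (by norm_num)
  rw [hp1, hp2, pdec_mk, ne_mk] at hd1
  by_cases hst : s = 1 ∧ t = 0
  · refine ⟨v, true, hv1, hv2, eq_Fch h0 hp1 ?_ hnorm⟩
    rw [hp2]
    show ((s, t) : ℕ × ℕ) = (1, 0)
    rw [Prod.mk.injEq]
    exact hst
  · refine ⟨v, false, hv1, hv2, eq_Fch h0 hp1 ?_ hnorm⟩
    rw [hp2]
    show ((s, t) : ℕ × ℕ) = (if v = 2 then (0, 1) else (1, 1))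
    by_cases hv : v = 2
    · rw [if_pos hv, Prod.mk.injEq]
      omega
    · rw [if_neg hv, Prod.mk.injEq]
      omega

theorem stmt8 (b : ℕ) (hb : 4 ≤ b) :
    {p : ℕ → ℕ × ℕ | NormFallingChain 3 b 3 p}.ncard = 2 * (b - 3) ∧
    (∀ k (p : ℕ → ℕ × ℕ), 2 ≤ k → k ≠ 3 → ¬ FallingChain 3 b k p) := by
  classical
  constructor
  · have hS : {p : ℕ → ℕ × ℕ | NormFallingChain 3 b 3 p} =
        ↑((Finset.Icc 2 (b - 2) ×ˢ (Finset.univ : Finset Bool)).image (Fch b)) := by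
      ext p
      simp only [Set.mem_setOf_eq, Finset.coe_image, Set.mem_image, Finset.mem_coe,
        Finset.mem_product, Finset.mem_Icc, Finset.mem_univ, and_true]
      constructor
      · intro h
        obtain ⟨e, c, he1, he2, hp⟩ := Fch_class hb h
        exact ⟨(e, c), ⟨he1, he2⟩, hp.symm⟩
      · rintro ⟨⟨e, c⟩, ⟨he1, he2⟩, rfl⟩
        exact Fch_norm c hb he1 he2
    rw [hS, Set.ncard_coe_finset]
    rw [Finset.card_image_of_injOn]
    · rw [Finset.card_product, Nat.card_Icc, Finset.card_univ, Fintype.card_bool]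
      omega
    · rintro ⟨e, c⟩ h1 ⟨e', c'⟩ h2 h
      have g1 : ((2, e) : ℕ × ℕ) = (2, e') := congrFun h 1
      have he : e = e' := congrArg Prod.snd g1
      subst he
      have g2 : (if c then ((1, 0) : ℕ × ℕ) else if e = 2 then (0, 1) else (1, 1)) =
          (if c' then (1, 0) else if e = 2 then (0, 1) else (1, 1)) := congrFun h 2
      rcases c with _ | _ <;> rcases c' with _ | _
      · rfl
      · exfalso
        simp only [Bool.false_eq_true, if_false, if_true] at g2
        split_ifs at g2 <;> (rw [Prod.mk.injEq] at g2; omega)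
      · exfalso
        simp only [Bool.false_eq_true, if_false, if_true] at g2
        split_ifs at g2 <;> (rw [Prod.mk.injEq] at g2; omega)
      · rfl
  · intro k p hk2 hk3 hF
    obtain ⟨h0, hk, hcov, hdec, hbord⟩ := hF
    rcases hp1 : p 1 with ⟨u, v⟩
    have hc0 := hcov 0 (by omega)
    rw [h0, hp1, cov_top hb] at hc0
    rcases Nat.lt_or_ge k 4 with hk4 | hk4
    · have hkk : k = 2 := by omega
      subst hkk
      have hc1 := hcov 1 (by omega)
      rw [hk, hp1, cov_bot] at hc1
      omega
    · have hd0 := hdec 0 (by omega)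
      rw [h0, hp1, pdec_mk, ne_mk] at hd0
      have hb1 := hbord 1 le_rfl (by omega)
      rw [hp1, border_mk] at hb1
      have hu : u = 2 := by omega
      have hv1 : 2 ≤ v := by omega
      subst hu
      rcases hp2 : p 2 with ⟨s, t⟩
      have hc1 := hcov 1 (by omega)
      rw [hp1, hp2, cov_two hv1] at hc1
      have hb2 := hbord 2 (by omega) (by omega)
      rw [hp2, border_mk] at hb2
      have hs : s ≤ 1 := by omega
      have ht : t ≤ 1 := by omega
      have hc2 := hcov 2 (by omega)
      rw [hp2] at hc2
      have h3 : p 3 = (0, 0) := plt_small hc2.1 hs ht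
      have hd2 := hdec 2 (by omega)
      rw [hp2, h3, pdec_mk, ne_mk] at hd2
      omega
end

section
/- Let 4 ≤ a ≤ b and k ≥ 1 with 2a−3k−2 ≤ b ≤ 2a−3k. Then the chain (a,b) → (a−1,b−2) → (a−2,b−4) → ... → (2k+2, b−2a+4k+4) → (2k, b−2a+4k+3) → (2k−2, b−2a+4k+2) → ... → (2, b−2a+3k+4) → (1,0) → (0,0) is a falling maximal chain of length a−k in P(a,b)*; and no falling maximal chain of length ≥ a−k+1 exists. -/
/-- A cover step that decreases the first coordinate by exactly one. -/
lemma cov1' {x1 x2 y2 : ℕ} (h1 : 1 ≤ x1) (h2 : x2 < y2 ∨ (x2 = 0 ∧ y2 = 0)) :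
    pcov (x1, x2) (x1 + 1, y2) := by
  refine ⟨⟨by simp only [ne_eq, Prod.ext_iff]; omega, Or.inr (Nat.lt_succ_self _), by omega⟩, ?_⟩
  rintro ⟨z1, z2⟩ ⟨_, hd1, hd2⟩ ⟨_, hd1', hd2'⟩
  simp only at hd1 hd2 hd1' hd2'
  omega

/-- A cover step that decreases the second coordinate by exactly one. -/
lemma cov2' {x1 x2 y1 : ℕ} (h1 : 1 ≤ x2) (h2 : x1 < y1 ∨ (x1 = 0 ∧ y1 = 0)) :
    pcov (x1, x2) (y1, x2 + 1) := by
  refine ⟨⟨by simp only [ne_eq, Prod.ext_iff]; omega, by omega, Or.inr (Nat.lt_succ_self _)⟩, ?_⟩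
  rintro ⟨z1, z2⟩ ⟨_, hd1, hd2⟩ ⟨_, hd1', hd2'⟩
  simp only at hd1 hd2 hd1' hd2'
  omega

/-- The bottom cover step `(0,0) ⋖ (1,0)`. -/
lemma cov0' : pcov (0, 0) (1, 0) := by
  refine ⟨⟨by simp only [ne_eq, Prod.ext_iff]; omega, Or.inr Nat.one_pos, Or.inl ⟨rfl, rfl⟩⟩, ?_⟩
  rintro ⟨z1, z2⟩ ⟨hne, hd1, hd2⟩ ⟨_, hd1', hd2'⟩
  simp only at hd1 hd2 hd1' hd2'
  simp only [ne_eq, Prod.ext_iff] at hne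
  omega

theorem stmt10 (a b k : ℕ) (ha : 4 ≤ a) (hab : a ≤ b) (hk : 1 ≤ k)
    (hb1 : 2 * a ≤ b + 3 * k + 2) (hb2 : b + 3 * k ≤ 2 * a) :
    FallingChain a b (a - k)
      (fun i =>
        if i + 2 * k + 2 ≤ a then (a - i, b - 2 * i)
        else if i + k + 2 ≤ a then
          (2 * (a - k - 1 - i), b + 3 * k + 4 - 2 * a + (a - k - 2 - i))
        else if i + k + 1 = a then (1, 0)
        else (0, 0)) ∧
    ∀ l, a - k + 1 ≤ l → ∀ q : ℕ → ℕ × ℕ, ¬ FallingChain a b l q := by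
  constructor
  · -- The explicit chain is a falling maximal chain.
    refine ⟨?_, ?_, ?_, ?_, ?_⟩
    · simp only
      rw [if_pos (by omega)]
      simp only [Prod.ext_iff]
      omega
    · simp only
      rw [if_neg (by omega), if_neg (by omega), if_neg (by omega)]
    · intro i hi
      simp only
      split_ifs with h1 h2 h3 h4 h5 h6 h7 h8 h9 h10 h11 h12 h13 h14 h15
      all_goals try omega
      -- phase 1 step: (a-i-1, b-2i-2) ⋖ (a-i, b-2i)
      · have e : a - i = (a - (i + 1)) + 1 := by omega
        rw [e]
        exact cov1' (by omega) (Or.inl (by omega))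
      -- transition step at i + 2k + 2 = a
      · have e : b - 2 * i = (b + 3 * k + 4 - 2 * a + (a - k - 2 - (i + 1))) + 1 := by omega
        rw [e]
        exact cov2' (by omega) (Or.inl (by omega))
      -- phase 2 step: decrease (2,1)
      · have e : b + 3 * k + 4 - 2 * a + (a - k - 2 - i)
            = (b + 3 * k + 4 - 2 * a + (a - k - 2 - (i + 1))) + 1 := by omega
        rw [e]
        exact cov2' (by omega) (Or.inl (by omega))
      -- step into (1,0)
      · have e : 2 * (a - k - 1 - i) = 1 + 1 := by omega
        rw [e]
        exact cov1' (by omega) (Or.inl (by omega))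
      -- final step (1,0) → (0,0)
      · exact cov0'
    · intro i hi
      simp only [pdec, ne_eq, Prod.ext_iff]
      split_ifs with h1 h2 h3 h4 h5 h6 h7 h8 h9 h10 h11 h12 h13 h14 h15
      all_goals simp only
      all_goals omega
    · intro i hi1 hi2
      simp only [border]
      split_ifs with h1 h2 h3
      all_goals simp only
      all_goals omega
  · -- No falling maximal chain of length ≥ a - k + 1 exists.
    intro l hl q hq
    obtain ⟨h0, hfin, hcov, hpdec, hbord⟩ := hq
    have hl4 : 4 ≤ l := by omega
    -- (0,0) cannot occur before the last index.
    have hne0 : ∀ i, i < l → q i ≠ (0, 0) := by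
      intro i hi h
      have hc := (hcov i hi).1
      rw [h] at hc
      obtain ⟨hne, hd1, hd2⟩ := hc
      simp only [ne_eq, Prod.ext_iff] at hne
      simp only at hd1 hd2
      omega
    -- all points except the last two have both coordinates ≥ 2
    have hbig : ∀ i, i + 2 ≤ l → 2 ≤ (q i).1 ∧ 2 ≤ (q i).2 := by
      intro i hi
      rcases Nat.eq_zero_or_pos i with h | h
      · subst h; rw [h0]; exact ⟨by omega, by omega⟩
      · have hb := hbord i h hi
        have h1 := hne0 i (by omega)
        have h2 := hne0 (i + 1) (by omega)
        have hc := (hcov i (by omega)).1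
        obtain ⟨_, hd1, hd2⟩ := hc
        simp only [border, not_or, not_and] at hb
        simp only [ne_eq, Prod.ext_iff] at h1 h2
        omega
    -- each non-final step drops the coordinate sum by at least 3
    have hdrop : ∀ i, i + 3 ≤ l → (q (i + 1)).1 + (q (i + 1)).2 + 3 ≤ (q i).1 + (q i).2 := by
      intro i hi
      have hy := hbig i (by omega)
      have hx := hbig (i + 1) (by omega)
      obtain ⟨⟨hne, hd1, hd2⟩, hz⟩ := hcov i (by omega)
      have hd := hpdec i (by omega)
      simp only [pdec, ne_eq, Prod.ext_iff] at hd
      have key : (q (i + 1)).1 + 1 = (q i).1 ∨ (q (i + 1)).2 + 1 = (q i).2 := by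
        by_contra hcon
        push_neg at hcon
        obtain ⟨c1, c2⟩ := hcon
        refine hz ((q (i + 1)).1 + 1, (q (i + 1)).2 + 1)
          ⟨by simp only [ne_eq, Prod.ext_iff]; omega, Or.inr (by omega), Or.inr (by omega)⟩
          ⟨by simp only [ne_eq, Prod.ext_iff]; omega, Or.inr (by omega), Or.inr (by omega)⟩
      omega
    -- telescoping the drops
    have htel : ∀ j, j + 2 ≤ l → (q j).1 + (q j).2 + 3 * j ≤ a + b := by
      intro j
      induction j with
      | zero => intro _; rw [h0]; omega
      | succ n ih =>
        intro hn
        have hd := hdrop n (by omega)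
        have := ih (by omega)
        omega
    have h1 := htel (l - 2) (by omega)
    have h2 := hbig (l - 2) (by omega)
    omega
end

section
/- For every a, b with 2 ≤ a ≤ b, and for every 0 ≤ i ≤ a−2−k where 2a−3k−2 ≤ b ≤ 2a−3k for some k ≥ 1 (or 0 ≤ i ≤ a−2 if b ≥ 2a−2), there exists a falling maximal chain of length i+2 in P(a,b)*. In particular, for every i between 0 and t_{(a,b)}, H_i(Δ(P(a,b)); ℤ) ≠ 0. -/
lemma pcov_of (x' y' x y : ℕ)
    (h : (x = x' + 1 ∧ 1 ≤ x' ∧ y' < y) ∨ (y = y' + 1 ∧ 1 ≤ y' ∧ x' < x) ∨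
      (x' = 0 ∧ y' = 0 ∧ x = 0 ∧ y = 1)) :
    pcov (x', y') (x, y) := by
  refine ⟨⟨?_, ?_, ?_⟩, ?_⟩
  · rw [ne_eq, Prod.mk.injEq]
    omega
  · simp only
    omega
  · simp only
    omega
  · rintro ⟨z1, z2⟩ ⟨hne1, hd11, hd12⟩ ⟨hne2, hd21, hd22⟩
    rw [ne_eq, Prod.mk.injEq] at hne1 hne2
    simp only at hd11 hd12 hd21 hd22
    omega

lemma minfact (u v : ℕ) :
    min u v ≤ u ∧ min u v ≤ v ∧ (u ≤ v → min u v = u) ∧ (v ≤ u → min u v = v) :=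
  ⟨min_le_left _ _, min_le_right _ _, fun h => min_eq_left h, fun h => min_eq_right h⟩

lemma chain_exists (a b i : ℕ) (hi : 1 ≤ i) (h2 : i + 2 ≤ b)
    (h1 : i + (2 * i + 2 - b) + 2 ≤ a) :
    ∃ p : ℕ → ℕ × ℕ, FallingChain a b (i + 2) p := by
  set s := 2 * i + 2 - b with hs
  refine ⟨fun j => if j ≤ i then
      (a - j - min j s, if j = 0 then b else min (b - j) (2 * (i - j) + 2))
    else if j = i + 1 then (0, 1) else (0, 0), ?_, ?_, ?_, ?_, ?_⟩
  · simp
  · have h3 : ¬ (i + 2 ≤ i) := by omega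
    have h4 : ¬ (i + 2 = i + 1) := by omega
    simp [h3, h4]
  · intro j hj
    by_cases hji : j + 1 ≤ i
    · have hj0 : j ≤ i := by omega
      have hj1 : j + 1 ≠ 0 := by omega
      simp only [if_pos hji, if_pos hj0, if_neg hj1]
      have m1 := minfact j s
      have m2 := minfact (j + 1) s
      have m3 := minfact (b - (j + 1)) (2 * (i - (j + 1)) + 2)
      by_cases hj00 : j = 0
      · rw [if_pos hj00]
        apply pcov_of
        omega
      · rw [if_neg hj00]
        have m4 := minfact (b - j) (2 * (i - j) + 2)
        apply pcov_of
        omega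
    · by_cases hje : j = i
      · have hj1 : ¬ (j + 1 ≤ i) := by omega
        have hj2 : j + 1 = i + 1 := by omega
        have hj0 : j ≤ i := by omega
        have hj00 : j ≠ 0 := by omega
        simp only [if_neg hj1, if_pos hj2, if_pos hj0, if_neg hj00]
        have m1 := minfact j s
        have m4 := minfact (b - j) (2 * (i - j) + 2)
        apply pcov_of
        omega
      · have h3 : ¬ (j ≤ i) := by omega
        have h4 : ¬ (j + 1 ≤ i) := by omega
        have h5 : ¬ (j + 1 = i + 1) := by omega
        have h6 : j = i + 1 := by omega
        simp only [if_neg h3, if_neg h4, if_neg h5, if_pos h6]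
        apply pcov_of
        omega
  · intro j hj
    have hj0 : j ≤ i := by omega
    simp only [if_pos hj0, pdec]
    have m1 := minfact j s
    by_cases hji : j + 1 ≤ i
    · have hj1 : j + 1 ≠ 0 := by omega
      simp only [if_pos hji, if_neg hj1, ne_eq, Prod.mk.injEq, not_and]
      have m2 := minfact (j + 1) s
      have m3 := minfact (b - (j + 1)) (2 * (i - (j + 1)) + 2)
      by_cases hj00 : j = 0
      · rw [if_pos hj00]
        intro hfst
        omega
      · rw [if_neg hj00]
        have m4 := minfact (b - j) (2 * (i - j) + 2)
        intro hfst
        omega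
    · have hje : j = i := by omega
      have hj1 : ¬ (j + 1 ≤ i) := by omega
      have hj2 : j + 1 = i + 1 := by omega
      have hj00 : j ≠ 0 := by omega
      simp only [if_neg hj1, if_pos hj2, if_neg hj00, ne_eq, Prod.mk.injEq, not_and]
      have m4 := minfact (b - j) (2 * (i - j) + 2)
      intro hfst
      omega
  · intro j hj1 hj2
    have hj0 : j ≤ i := by omega
    have hj00 : j ≠ 0 := by omega
    simp only [if_pos hj0, if_neg hj00, border, not_or]
    have m1 := minfact j s
    have m4 := minfact (b - j) (2 * (i - j) + 2)
    refine ⟨?_, ?_, ?_, ?_⟩ <;> simp only [not_and] <;> omega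

theorem stmt17 (a b : ℕ) (ha : 2 ≤ a) (hab : a ≤ b) :
    (2 * a ≤ b + 2 → ∀ i, 1 ≤ i → i ≤ a - 2 → ∃ p : ℕ → ℕ × ℕ, FallingChain a b (i + 2) p) ∧
    (∀ k, 1 ≤ k → 2 * a ≤ b + 3 * k + 2 → b + 3 * k ≤ 2 * a →
      ∀ i, 1 ≤ i → i + k ≤ a - 2 → ∃ p : ℕ → ℕ × ℕ, FallingChain a b (i + 2) p) := by
  constructor
  · intro hb i hi1 hi2
    exact chain_exists a b i hi1 (by omega) (by omega)
  · intro k hk1 hk2 hk3 i hi1 hi2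
    exact chain_exists a b i hi1 (by omega) (by omega)
end
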